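/- arXiv:1603.08055 — 3 statements merged into one kernel-verified Lean document; each statement's English description precedes it below -/
import Mathlib

section
/- Let f : ℝ → ℝ be four times continuously differentiable on an open interval containing [a,b] with a < b, and M := sup_{x ∈ (a,b)} |f⁗(x)| < ∞. Then |∫_a^b f(x) dx - ((b-a)/6)·[f(a) + 4·f((a+b)/2) + f(b)]| ≤ ((b-a)⁵/2880)·M. -/
/-! With `m` the midpoint and `u t = f (m + t) + f (m - t)`, the Simpson error on `[m - t, m + t]`
is `E t = ∫₀ᵗ u - t / 3 * (u t + 2 * u 0)`. Here `E`, `E'`, `E''` vanish at `0` and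
`E''' t = -(t / 3) * u''' t`, while `|u''' t| = |f''' (m + t) - f''' (m - t)| ≤ 2 M t` by the mean
value theorem. Integrating `|E'''| ≤ 2 M t² / 3` three times gives `|E t| ≤ M t⁵ / 90`, which at
`t = (b - a) / 2` is the claim. -/

open Set

theorem ContDiffOn.hasDerivAt_iteratedDeriv {𝕜 F : Type*} [NontriviallyNormedField 𝕜]
    [NormedAddCommGroup F] [NormedSpace 𝕜 F] {f : 𝕜 → F} {s : Set 𝕜} {n : WithTop ℕ∞}
    {k : ℕ} {x : 𝕜} (hf : ContDiffOn 𝕜 n f s) (hs : IsOpen s) (hk : k < n) (hx : x ∈ s) :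
    HasDerivAt (iteratedDeriv k f) (iteratedDeriv (k + 1) f x) x := by
  have hd : DifferentiableOn 𝕜 (iteratedDeriv k f) s :=
    (hf.differentiableOn_iteratedDerivWithin hk hs.uniqueDiffOn).congr
      fun y hy => (iteratedDerivWithin_of_isOpen hs hy).symm
  rw [iteratedDeriv_succ]
  exact (hd.differentiableAt (hs.mem_nhds hx)).hasDerivAt

section Reflection

variable {𝕜 F : Type*} [NontriviallyNormedField 𝕜] [NormedAddCommGroup F] [NormedSpace 𝕜 F]
  {φ : 𝕜 → F} {φ₁ φ₂ : F} {m t : 𝕜}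

theorem HasDerivAt.comp_const_add_add_comp_const_sub (h₁ : HasDerivAt φ φ₁ (m + t))
    (h₂ : HasDerivAt φ φ₂ (m - t)) :
    HasDerivAt (fun s => φ (m + s) + φ (m - s)) (φ₁ - φ₂) t :=
  ((h₁.comp_const_add m t).add (h₂.comp_const_sub m t)).congr_deriv (sub_eq_add_neg _ _).symm

theorem HasDerivAt.comp_const_add_sub_comp_const_sub (h₁ : HasDerivAt φ φ₁ (m + t))
    (h₂ : HasDerivAt φ φ₂ (m - t)) :
    HasDerivAt (fun s => φ (m + s) - φ (m - s)) (φ₁ + φ₂) t :=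
  ((h₁.comp_const_add m t).sub (h₂.comp_const_sub m t)).congr_deriv (sub_neg_eq_add _ _)

end Reflection

theorem norm_le_div_mul_pow_succ_of_norm_deriv_le {E : Type*} [NormedAddCommGroup E]
    [NormedSpace ℝ E] {g g' : ℝ → E} {h C : ℝ} {n : ℕ}
    (hg : ∀ t ∈ Icc 0 h, HasDerivAt g (g' t) t) (hg₀ : g 0 = 0)
    (bound : ∀ t ∈ Ico 0 h, ‖g' t‖ ≤ C * t ^ n) :
    ∀ t ∈ Icc 0 h, ‖g t‖ ≤ C / (n + 1) * t ^ (n + 1) := by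
  have hB : ∀ t, HasDerivAt (fun t => C / (n + 1) * t ^ (n + 1)) (C * t ^ n) t := fun t => by
    refine ((hasDerivAt_pow (n + 1) t).const_mul (C / (n + 1))).congr_deriv ?_
    rw [Nat.add_sub_cancel]
    push_cast
    field_simp
  exact image_norm_le_of_norm_deriv_right_le_deriv_boundary
    (fun t ht => (hg t ht).continuousAt.continuousWithinAt)
    (fun t ht => (hg t (Ico_subset_Icc_self ht)).hasDerivWithinAt) (by simp [hg₀]) hB bound

theorem abs_sub_simpson_le_of_abs_deriv_le {G u u₁ u₂ u₃ : ℝ → ℝ} {h K : ℝ}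
    (hG : ∀ t ∈ Icc 0 h, HasDerivAt G (u t) t) (hu : ∀ t ∈ Icc 0 h, HasDerivAt u (u₁ t) t)
    (hu₁ : ∀ t ∈ Icc 0 h, HasDerivAt u₁ (u₂ t) t)
    (hu₂ : ∀ t ∈ Icc 0 h, HasDerivAt u₂ (u₃ t) t)
    (hG₀ : G 0 = 0) (hu₁₀ : u₁ 0 = 0) (hu₃ : ∀ t ∈ Ico 0 h, |u₃ t| ≤ K * t) :
    ∀ t ∈ Icc 0 h, |G t - t / 3 * (u t + 2 * u 0)| ≤ K / 180 * t ^ 5 := by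
  have hid : ∀ t : ℝ, HasDerivAt (fun s : ℝ => s / 3) (1 / 3) t := fun t =>
    (hasDerivAt_id t).div_const 3
  have e₃ : ∀ t ∈ Icc 0 h,
      HasDerivAt (fun s => 1 / 3 * u₁ s - s / 3 * u₂ s) (-(t / 3) * u₃ t) t := fun t ht =>
    (((hu₁ t ht).const_mul (1 / 3)).sub ((hid t).mul (hu₂ t ht))).congr_deriv (by ring)
  have e₂ : ∀ t ∈ Icc 0 h, HasDerivAt (fun s => 2 / 3 * (u s - u 0) - s / 3 * u₁ s)
      (1 / 3 * u₁ t - t / 3 * u₂ t) t := fun t ht =>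
    ((((hu t ht).sub_const (u 0)).const_mul (2 / 3)).sub
      ((hid t).mul (hu₁ t ht))).congr_deriv (by ring)
  have e₁ : ∀ t ∈ Icc 0 h, HasDerivAt (fun s => G s - s / 3 * (u s + 2 * u 0))
      (2 / 3 * (u t - u 0) - t / 3 * u₁ t) t := fun t ht =>
    ((hG t ht).sub ((hid t).mul ((hu t ht).add_const (2 * u 0)))).congr_deriv (by ring)
  have b₃ : ∀ t ∈ Ico 0 h, ‖-(t / 3) * u₃ t‖ ≤ K / 3 * t ^ 2 := fun t ht => by
    rw [Real.norm_eq_abs, abs_mul, abs_neg,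
      abs_of_nonneg (by linarith [ht.1] : (0 : ℝ) ≤ t / 3)]
    nlinarith [hu₃ t ht, abs_nonneg (u₃ t), ht.1]
  have b₂ := norm_le_div_mul_pow_succ_of_norm_deriv_le e₃ (by simp [hu₁₀]) b₃
  have b₁ := norm_le_div_mul_pow_succ_of_norm_deriv_le e₂ (by simp)
    fun t ht => b₂ t (Ico_subset_Icc_self ht)
  have b₀ := norm_le_div_mul_pow_succ_of_norm_deriv_le e₁ (by simp [hG₀])
    fun t ht => b₁ t (Ico_subset_Icc_self ht)
  intro t ht
  convert b₀ t ht using 1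
  norm_num
  ring

theorem abs_integral_sub_simpson_le {f : ℝ → ℝ} {U : Set ℝ} {a b M : ℝ} (hU : IsOpen U)
    (hf : ContDiffOn ℝ 4 f U) (hab : a ≤ b) (hsub : Icc a b ⊆ U)
    (hM : ∀ x ∈ Ioo a b, |iteratedDeriv 4 f x| ≤ M) :
    |(∫ x in a..b, f x) - (b - a) / 6 * (f a + 4 * f ((a + b) / 2) + f b)|
      ≤ (b - a) ^ 5 / 2880 * M := by
  set m := (a + b) / 2 with hm
  set h := (b - a) / 2 with hh
  have hmem : ∀ t ∈ Icc 0 h, m + t ∈ Icc a b ∧ m - t ∈ Icc a b := fun t ht =>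
    ⟨⟨by linarith [ht.1], by linarith [ht.2]⟩, ⟨by linarith [ht.2], by linarith [ht.1]⟩⟩
  have hD : ∀ k < 4, ∀ y ∈ Icc a b,
      HasDerivAt (iteratedDeriv k f) (iteratedDeriv (k + 1) f y) y := fun k hk y hy =>
    hf.hasDerivAt_iteratedDeriv hU (by exact_mod_cast hk) (hsub hy)
  set F := fun y => ∫ x in a..y, f x
  have hF : ∀ y ∈ Icc a b, HasDerivAt F (f y) y := fun y hy =>
    intervalIntegral.integral_hasDerivAt_right
      (hf.continuousOn.mono ((uIcc_subset_Icc (left_mem_Icc.2 hab) hy).trans hsub)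
        |>.intervalIntegrable)
      (hf.continuousOn.stronglyMeasurableAtFilter hU y (hsub hy))
      (hf.continuousOn.continuousAt (hU.mem_nhds (hsub hy)))
  have hbound : ∀ t ∈ Ico 0 h,
      |iteratedDeriv 3 f (m + t) - iteratedDeriv 3 f (m - t)| ≤ 2 * M * t := by
    rintro t ⟨ht₀, ht₁⟩
    have hin : m + t ∈ Ioo a b ∧ m - t ∈ Ioo a b :=
      ⟨⟨by linarith, by linarith⟩, ⟨by linarith, by linarith⟩⟩
    have hmvt := (convex_Ioo a b).norm_image_sub_le_of_norm_hasDerivWithin_le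
      (fun x hx => (hD 3 (by norm_num) x (Ioo_subset_Icc_self hx)).hasDerivWithinAt)
      hM hin.2 hin.1
    rw [Real.norm_eq_abs, Real.norm_eq_abs, show m + t - (m - t) = 2 * t by ring,
      abs_of_nonneg (by linarith : (0 : ℝ) ≤ 2 * t)] at hmvt
    linarith
  have hE := abs_sub_simpson_le_of_abs_deriv_le (K := 2 * M)
    (fun t ht => (hF _ (hmem t ht).1).comp_const_add_sub_comp_const_sub (hF _ (hmem t ht).2))
    (fun t ht => (hD 0 (by norm_num) _ (hmem t ht).1).comp_const_add_add_comp_const_sub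
      (hD 0 (by norm_num) _ (hmem t ht).2))
    (fun t ht => (hD 1 (by norm_num) _ (hmem t ht).1).comp_const_add_sub_comp_const_sub
      (hD 1 (by norm_num) _ (hmem t ht).2))
    (fun t ht => (hD 2 (by norm_num) _ (hmem t ht).1).comp_const_add_add_comp_const_sub
      (hD 2 (by norm_num) _ (hmem t ht).2))
    (by simp) (by simp) hbound h ⟨by linarith, le_rfl⟩
  rw [show m + h = b by linarith, show m - h = a by linarith, add_zero, sub_zero] at hE
  simp only [F, intervalIntegral.integral_same, sub_zero] at hE
  rw [hh] at hE
  convert hE using 1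
  · congr 1
    ring
  · ring

theorem classical_simpson_inequality
    (f : ℝ → ℝ) (a b c d : ℝ) (hab : a < b) (hca : c < a) (hbd : b < d)
    (hf : ContDiffOn ℝ 4 f (Set.Ioo c d))
    (M : ℝ) (hM : M = sSup ((fun x => |iteratedDeriv 4 f x|) '' Set.Ioo a b))
    (hbdd : BddAbove ((fun x => |iteratedDeriv 4 f x|) '' Set.Ioo a b)) :
    |(∫ x in a..b, f x) - ((b-a)/6) * (f a + 4 * f ((a+b)/2) + f b)|
      ≤ ((b-a)^5 / 2880) * M := by
  refine abs_integral_sub_simpson_le isOpen_Ioo hf hab.le (Icc_subset_Ioo hca hbd) ?_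
  intro x hx
  rw [hM]
  exact le_csSup hbdd (mem_image_of_mem _ hx)
end

section
/- For f(x) = exp(x²) on [0,1], the Simpson rule error satisfies |∫_0^1 exp(x²) dx - (1/6)·[f(0) + 4·f(1/2) + f(1)]| ≤ (1/5760)·[|f⁗(1/2)| + |f⁗(1)|], and the right-hand side equals (1/5760)·(e^{1/4}·(16·(1/2)⁴ + 48·(1/2)² + 12) + e·(16 + 48 + 12)), which is strictly smaller than the classical bound (1/2880)·sup_{x∈(0,1)} |f⁗(x)| = (1/2880)·76·e. -/
/-!
The fourth derivative is `(16x⁴ + 48x² + 12)·e^{x²}`: each differentiation of `p(x)·e^{x²}`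
gives `(p' + 2xp)·e^{x²}`. Replacing `e^t` by its cubic Taylor polynomial at `t = x²`
(remainder at most `5t⁴/96` for `|t| ≤ 1`) pins `∫₀¹ e^{x²}` to within `5/864` of `51/35`. With
`1.25 ≤ e^{1/4} < 1.29` and the nine-digit bounds on `e`, all three claims are then linear
inequalities in `e^{1/4}` and `e`, with ample room.
-/

open Real Polynomial intervalIntegral

noncomputable def expSqDerivPoly : ℕ → ℝ[X]
  | 0 => 1
  | n + 1 => derivative (expSqDerivPoly n) + 2 * X * expSqDerivPoly n

theorem iteratedDeriv_exp_sq (n : ℕ) :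
    iteratedDeriv n (fun x => exp (x ^ 2)) = fun x => (expSqDerivPoly n).eval x * exp (x ^ 2) := by
  induction n with
  | zero => simp [expSqDerivPoly]
  | succ n ih =>
    rw [iteratedDeriv_succ, ih]
    funext x
    have hexp : HasDerivAt (fun x => exp (x ^ 2)) (exp (x ^ 2) * (2 * x)) x := by
      simpa using (hasDerivAt_pow 2 x).exp
    refine (((expSqDerivPoly n).hasDerivAt x).mul hexp).deriv.trans ?_
    simp only [expSqDerivPoly, eval_add, eval_mul, eval_X, eval_ofNat]
    ring

theorem iteratedDeriv_four_exp_sq (x : ℝ) :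
    iteratedDeriv 4 (fun x => exp (x ^ 2)) x = (16 * x ^ 4 + 48 * x ^ 2 + 12) * exp (x ^ 2) := by
  simp only [iteratedDeriv_exp_sq, expSqDerivPoly, derivative_one, derivative_add,
    derivative_mul, derivative_ofNat, derivative_X, derivative_zero, eval_add, eval_mul,
    eval_ofNat, eval_X, eval_one, eval_zero]
  ring

theorem abs_exp_sub_taylor_three_le {t : ℝ} (ht : |t| ≤ 1) :
    |exp t - (1 + t + t ^ 2 / 2 + t ^ 3 / 6)| ≤ 5 / 96 * t ^ 4 := by
  have hsum : ∑ i ∈ Finset.range 4, t ^ i / i.factorial = 1 + t + t ^ 2 / 2 + t ^ 3 / 6 := by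
    simp [Finset.sum_range_succ, Nat.factorial]
  calc |exp t - (1 + t + t ^ 2 / 2 + t ^ 3 / 6)|
      ≤ |t| ^ 4 * ((Nat.succ 4) / (Nat.factorial 4 * 4)) := hsum ▸ exp_bound ht (by norm_num)
    _ = 5 / 96 * t ^ 4 := by
      rw [(by decide : Even 4).pow_abs]
      norm_num [Nat.factorial]
      ring

theorem integral_exp_sq_taylor :
    ∫ x in (0 : ℝ)..1, (1 + x ^ 2 + x ^ 4 / 2 + x ^ 6 / 6) = 51 / 35 := by
  rw [integral_add, integral_add, integral_add, integral_div, integral_div] <;> norm_num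

theorem abs_integral_exp_sq_sub_le :
    |(∫ x in (0 : ℝ)..1, exp (x ^ 2)) - 51 / 35| ≤ 5 / 864 := by
  have hf : Continuous fun x : ℝ => exp (x ^ 2) := by fun_prop
  have hp : Continuous fun x : ℝ => 1 + x ^ 2 + x ^ 4 / 2 + x ^ 6 / 6 := by fun_prop
  rw [← integral_exp_sq_taylor,
    ← integral_sub (hf.intervalIntegrable 0 1) (hp.intervalIntegrable 0 1)]
  calc |∫ x in (0 : ℝ)..1, (exp (x ^ 2) - (1 + x ^ 2 + x ^ 4 / 2 + x ^ 6 / 6))|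
      ≤ ∫ x in (0 : ℝ)..1, 5 / 96 * x ^ 8 := by
        rw [← Real.norm_eq_abs]
        refine norm_integral_le_of_norm_le zero_le_one (.of_forall fun x hx => ?_) ?_
        · have hx2 : |x ^ 2| ≤ 1 := by
            rw [abs_of_nonneg (sq_nonneg x)]
            exact pow_le_one₀ hx.1.le hx.2
          simpa [← pow_mul] using abs_exp_sub_taylor_three_le hx2
        · exact Continuous.intervalIntegrable (by fun_prop) 0 1
    _ = 5 / 864 := by norm_num

theorem exp_quarter_lt : exp (1 / 4) < 1.29 := by
  refine lt_of_pow_lt_pow_left₀ 4 (by norm_num) ?_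
  rw [← exp_nat_mul]
  norm_num
  linarith [exp_one_lt_d9]

theorem simpson_exp_sq_example :
    let f : ℝ → ℝ := fun x => Real.exp (x^2)
    |(∫ x in (0:ℝ)..1, f x) - (1/6) * (f 0 + 4 * f (1/2) + f 1)|
        ≤ (1/5760) * (|iteratedDeriv 4 f (1/2)| + |iteratedDeriv 4 f 1|) ∧
    (1/5760) * (|iteratedDeriv 4 f (1/2)| + |iteratedDeriv 4 f 1|)
        = (1/5760) * (Real.exp (1/4) * (16*(1/2)^4 + 48*(1/2)^2 + 12)
            + Real.exp 1 * (16 + 48 + 12)) ∧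
    (1/5760) * (|iteratedDeriv 4 f (1/2)| + |iteratedDeriv 4 f 1|)
        < (1/2880) * (76 * Real.exp 1) := by
  intro f
  have habs_deriv (x : ℝ) :
      |iteratedDeriv 4 f x| = (16 * x ^ 4 + 48 * x ^ 2 + 12) * exp (x ^ 2) := by
    rw [iteratedDeriv_four_exp_sq]
    exact abs_of_pos (by positivity)
  have hderiv : |iteratedDeriv 4 f (1 / 2)| + |iteratedDeriv 4 f 1|
      = exp (1 / 4) * (16 * (1 / 2) ^ 4 + 48 * (1 / 2) ^ 2 + 12) + exp 1 * (16 + 48 + 12) := by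
    rw [habs_deriv, habs_deriv]
    norm_num
    ring
  have hsimpson : (1 / 6) * (f 0 + 4 * f (1 / 2) + f 1) = (1 + 4 * exp (1 / 4) + exp 1) / 6 := by
    norm_num [f]
    ring
  obtain ⟨hI₀, hI₁⟩ := abs_le.1
    (abs_integral_exp_sq_sub_le : |(∫ x in (0 : ℝ)..1, f x) - 51 / 35| ≤ 5 / 864)
  have hq₀ := add_one_le_exp (1 / 4 : ℝ)
  have hq₁ := exp_quarter_lt
  have he₀ := exp_one_gt_d9
  have he₁ := exp_one_lt_d9
  refine ⟨?_, by rw [hderiv], ?_⟩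
  · rw [hderiv, hsimpson, abs_le]
    constructor <;> linarith
  · rw [hderiv]
    linarith
end

section
/- Let f : [a,b] → ℝ be of bounded variation with a < b. Then |∫_a^b f(x) dx - ((b-a)/6)·[f(a) + 4·f((a+b)/2) + f(b)]| ≤ ((b-a)/3)·V_a^b(f), where V_a^b(f) is the total variation of f on [a,b]. -/
open Set MeasureTheory

/-!
Cut `[a, b]` at its midpoint `m`. On `[a, m]` the Simpson weights
`(b - a)/6 · f a + (b - a)/3 · f m` amount to replacing `f` by `f a` on `[a, (5a + b)/6]` and
by `f m` on `[(5a + b)/6, m]`, and symmetrically on `[m, b]`. Replacing `f` by one of its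
values on a piece of length `ℓ` costs at most `ℓ` times the variation of `f` on that piece;
all four pieces have length at most `(b - a)/3`, and variation is additive over adjacent
intervals.
-/

namespace BoundedVariationOn

variable {f : ℝ → ℝ} {u v w : ℝ}

theorem intervalIntegrable (hf : BoundedVariationOn f (Icc u v)) (huv : u ≤ v) :
    IntervalIntegrable f volume u v := by
  obtain ⟨p, q, hp, hq, rfl⟩ := hf.locallyBoundedVariationOn.exists_monotoneOn_sub_monotoneOn
  rw [← uIcc_of_le huv] at hp hq
  exact hp.intervalIntegrable.sub hq.intervalIntegrable

theorem variation_Icc_add_Icc (hf : BoundedVariationOn f (Icc u v)) (huw : u ≤ w)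
    (hwv : w ≤ v) :
    (eVariationOn f (Icc u w)).toReal + (eVariationOn f (Icc w v)).toReal
      = (eVariationOn f (Icc u v)).toReal := by
  have hadd := eVariationOn.Icc_add_Icc f (s := univ) huw hwv (mem_univ w)
  simp only [univ_inter] at hadd
  rw [← hadd, ENNReal.toReal_add (hf.mono (Icc_subset_Icc le_rfl hwv))
    (hf.mono (Icc_subset_Icc huw le_rfl))]

theorem abs_integral_sub_mul_le {k : ℝ} (hf : BoundedVariationOn f (Icc u v)) (huv : u ≤ v)
    (hk : k ∈ Icc u v) :
    |(∫ x in u..v, f x) - (v - u) * f k| ≤ (v - u) * (eVariationOn f (Icc u v)).toReal := by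
  have hdev : ∀ x ∈ uIoc u v, ‖f x - f k‖ ≤ (eVariationOn f (Icc u v)).toReal := by
    intro x hx
    rw [uIoc_of_le huv] at hx
    rw [← dist_eq_norm, dist_edist]
    exact ENNReal.toReal_mono hf (eVariationOn.edist_le f (Ioc_subset_Icc_self hx) hk)
  have hint : (∫ x in u..v, f x - f k) = (∫ x in u..v, f x) - (v - u) * f k := by
    rw [intervalIntegral.integral_sub (hf.intervalIntegrable huv) intervalIntegrable_const,
      intervalIntegral.integral_const, smul_eq_mul]
  have hbound := intervalIntegral.norm_integral_le_of_norm_le_const hdev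
  rwa [hint, Real.norm_eq_abs, abs_of_nonneg (sub_nonneg.2 huv),
    mul_comm (eVariationOn f _).toReal] at hbound

theorem abs_integral_sub_add_le_of_split {L A B : ℝ} (hf : BoundedVariationOn f (Icc u v))
    (huw : u ≤ w) (hwv : w ≤ v)
    (hA : |(∫ x in u..w, f x) - A| ≤ L * (eVariationOn f (Icc u w)).toReal)
    (hB : |(∫ x in w..v, f x) - B| ≤ L * (eVariationOn f (Icc w v)).toReal) :
    |(∫ x in u..v, f x) - (A + B)| ≤ L * (eVariationOn f (Icc u v)).toReal := by
  have hsplit : (∫ x in u..v, f x) = (∫ x in u..w, f x) + ∫ x in w..v, f x :=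
    (intervalIntegral.integral_add_adjacent_intervals
      ((hf.mono (Icc_subset_Icc le_rfl hwv)).intervalIntegrable huw)
      ((hf.mono (Icc_subset_Icc huw le_rfl)).intervalIntegrable hwv)).symm
  calc |(∫ x in u..v, f x) - (A + B)|
      = |((∫ x in u..w, f x) - A) + ((∫ x in w..v, f x) - B)| := by rw [hsplit]; ring_nf
    _ ≤ |(∫ x in u..w, f x) - A| + |(∫ x in w..v, f x) - B| := abs_add_le _ _
    _ ≤ L * (eVariationOn f (Icc u w)).toReal + L * (eVariationOn f (Icc w v)).toReal :=
        add_le_add hA hB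
    _ = L * (eVariationOn f (Icc u v)).toReal := by
        rw [← mul_add, hf.variation_Icc_add_Icc huw hwv]

theorem abs_integral_sub_two_point_le {L : ℝ} (hf : BoundedVariationOn f (Icc u v))
    (huw : u ≤ w) (hwv : w ≤ v) (hwu : w - u ≤ L) (hvw : v - w ≤ L) :
    |(∫ x in u..v, f x) - ((w - u) * f u + (v - w) * f v)|
      ≤ L * (eVariationOn f (Icc u v)).toReal := by
  refine hf.abs_integral_sub_add_le_of_split huw hwv ?_ ?_
  · exact ((hf.mono (Icc_subset_Icc le_rfl hwv)).abs_integral_sub_mul_le huw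
      (left_mem_Icc.2 huw)).trans (mul_le_mul_of_nonneg_right hwu ENNReal.toReal_nonneg)
  · exact ((hf.mono (Icc_subset_Icc huw le_rfl)).abs_integral_sub_mul_le hwv
      (right_mem_Icc.2 hwv)).trans (mul_le_mul_of_nonneg_right hvw ENNReal.toReal_nonneg)

end BoundedVariationOn

theorem simpson_bounded_variation
    (f : ℝ → ℝ) (a b : ℝ) (hab : a < b)
    (hbv : BoundedVariationOn f (Set.Icc a b)) :
    |(∫ x in a..b, f x) - ((b-a)/6) * (f a + 4 * f ((a+b)/2) + f b)|
      ≤ ((b-a)/3) * (eVariationOn f (Set.Icc a b)).toReal := by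
  have ham : a ≤ (a + b) / 2 := by linarith
  have hmb : (a + b) / 2 ≤ b := by linarith
  have hleft := (hbv.mono (Icc_subset_Icc le_rfl hmb)).abs_integral_sub_two_point_le
    (w := (5 * a + b) / 6) (L := (b - a) / 3) (by linarith) (by linarith) (by linarith)
    (by linarith)
  have hright := (hbv.mono (Icc_subset_Icc ham le_rfl)).abs_integral_sub_two_point_le
    (w := (a + 5 * b) / 6) (L := (b - a) / 3) (by linarith) (by linarith) (by linarith)
    (by linarith)
  have hsimpson := hbv.abs_integral_sub_add_le_of_split ham hmb hleft hright
  convert hsimpson using 3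
  ring
end
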